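/- For all integers n ≥ 1, i ≥ 1, and N ≥ 2, we have Σ_{j=2}^{N} C(⌊(n−1)/j⌋ − ⌊n/(j+1)⌋, i) ≤ h_{n,i} ≤ C(⌈n/2⌉ − 2i, i), where C(m, i) denotes the binomial coefficient, taken to be 0 when m < i (and the top entry ⌈n/2⌉ − 2i is interpreted as 0 when negative). -/

import Mathlib

open Filter Topology
open scoped Classical BigOperators

/-- The set of gaps of a numerical semigroup `S ⊆ ℕ`. -/
def gapSet (S : AddSubmonoid ℕ) : Set ℕ := {n : ℕ | n ∉ S}

/-- `S` is cofinite if its set of gaps is finite. -/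
def IsCofinite (S : AddSubmonoid ℕ) : Prop := (gapSet S).Finite

/-- The minimal generators of `S`: nonzero elements of `S` that are not the
sum of two nonzero elements of `S`. -/
def minGens (S : AddSubmonoid ℕ) : Set ℕ :=
  {s : ℕ | s ∈ S ∧ s ≠ 0 ∧ ¬ ∃ a ∈ S, ∃ b ∈ S, a ≠ 0 ∧ b ≠ 0 ∧ s = a + b}

/-- The embedding dimension `e(S)`: the number of minimal generators of `S`. -/
noncomputable def embDim (S : AddSubmonoid ℕ) : ℕ := (minGens S).ncard

/-- The genus `g(S)`: the number of gaps of `S` (junk value `0` if `S` is not cofinite). -/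
noncomputable def genus (S : AddSubmonoid ℕ) : ℕ := (gapSet S).ncard

/-- The Frobenius number `F(S)`: the largest gap of `S`
(junk value `0` if `S` is not cofinite or `S = ℕ`). -/
noncomputable def frob (S : AddSubmonoid ℕ) : ℕ := sSup (gapSet S)

/-- A cofinite numerical semigroup `S ≠ ℕ` is irreducible if it is maximal with
respect to inclusion among numerical semigroups with Frobenius number `F(S)`. -/
def IsIrred (S : AddSubmonoid ℕ) : Prop :=
  IsCofinite S ∧ S ≠ ⊤ ∧
    ∀ T : AddSubmonoid ℕ, S ≤ T → frob T = frob S → T = S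

/-- The number of gaps of `S` that are at most `M`. -/
noncomputable def gapsUpTo (S : AddSubmonoid ℕ) (M : ℕ) : ℕ :=
  {x : ℕ | x ∉ S ∧ x ≤ M}.ncard

/-- The probability weight of a generating set `B ⊆ {1, …, M}` in the ER-type
model `S(M, p)`. -/
noncomputable def wt (p : ℝ) (M : ℕ) (B : Finset ℕ) : ℝ :=
  p ^ B.card * (1 - p) ^ (M - B.card)

/-- The probability in the ER-type model `S(M, p)` that the random numerical
semigroup `𝒮 = ⟨𝒜⟩` lies in the event `E`. -/
noncomputable def probEvent (M : ℕ) (p : ℝ) (E : Set (AddSubmonoid ℕ)) : ℝ :=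
  ∑ B ∈ (Finset.Icc 1 M).powerset,
    if AddSubmonoid.closure (B : Set ℕ) ∈ E then wt p M B else 0

/-- The expectation in the ER-type model `S(M, p)` of an invariant `X` of the
random numerical semigroup `𝒮 = ⟨𝒜⟩`. -/
noncomputable def expectVal (M : ℕ) (p : ℝ) (X : AddSubmonoid ℕ → ℕ) : ℝ :=
  ∑ B ∈ (Finset.Icc 1 M).powerset,
    (X (AddSubmonoid.closure (B : Set ℕ)) : ℝ) * wt p M B

/-- `h_{n,i}`: the number of numerical semigroups `T` with `n ∉ T`, embedding
dimension `i`, and all minimal generators strictly less than `n/2`. -/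
noncomputable def hvec (n i : ℕ) : ℕ :=
  {T : AddSubmonoid ℕ | n ∉ T ∧ embDim T = i ∧ ∀ a ∈ minGens T, 2 * a < n}.ncard

/-- `a_n(p)`: the probability that `n` is not in the semigroup generated by a
random subset of `{1, …, n-1}` chosen with inclusion probability `p`. -/
noncomputable def anp (n : ℕ) (p : ℝ) : ℝ :=
  ∑ A ∈ (Finset.Icc 1 (n - 1)).powerset,
    if n ∉ AddSubmonoid.closure (A : Set ℕ) then
      p ^ A.card * (1 - p) ^ (n - 1 - A.card) else 0

/-!
The minimal generators of a semigroup `T` are pairwise incongruent modulo every `m ∈ T`. If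
`n ∉ T`, all generators are at most `n / 2` and `m` is a generator with `m < 2 e(T)`, then by
pigeonhole in `ZMod m` some generators satisfy `a + b ≡ n`, and `n = a + b + q m ∈ T`. So the
generators of a semigroup counted by `h_{n,i}` form an `i`-subset of `[2i, n/2)`, which gives the
upper bound.

For the lower bound, take an `i`-subset `A` of the window `(n/(j+1), n/j)` with `j ≥ 2`. A sum
of two elements of `A` is larger than `n/j`, so `A` is the set of minimal generators of `⟨A⟩`.
A sum of `k` elements of `A` lies in `(kn/(j+1), kn/j)`, and that interval never contains `n`.
The windows for different `j` are disjoint, so the resulting semigroups are all distinct.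
-/

section MinimalGenerators

lemma closure_minGens (T : AddSubmonoid ℕ) :
    AddSubmonoid.closure (minGens T) = T := by
  refine le_antisymm (AddSubmonoid.closure_le.2 fun x hx => hx.1) fun t ht => ?_
  induction t using Nat.strong_induction_on with
  | _ t IH =>
    rcases eq_or_ne t 0 with rfl | h0
    · exact zero_mem _
    by_cases hmin : t ∈ minGens T
    · exact AddSubmonoid.subset_closure hmin
    · obtain ⟨a, ha, b, hb, ha0, hb0, rfl⟩ := not_not.1 fun h => hmin ⟨ht, h0, h⟩
      exact add_mem (IH a (by omega) ha) (IH b (by omega) hb)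

lemma minGens_injective : Function.Injective minGens := fun S T h => by
  rw [← closure_minGens S, ← closure_minGens T, h]

lemma finite_setOf_forall_minGens_lt (n : ℕ) :
    {T : AddSubmonoid ℕ | ∀ a ∈ minGens T, a < n}.Finite :=
  (Set.finite_Iio n).powerset.preimage minGens_injective.injOn

lemma minGens_closure_subset (A : Set ℕ) : minGens (AddSubmonoid.closure A) ⊆ A := by
  have key : ∀ x ∈ AddSubmonoid.closure A, x = 0 ∨ x ∈ A ∨
      ∃ a ∈ AddSubmonoid.closure A, ∃ b ∈ AddSubmonoid.closure A, a ≠ 0 ∧ b ≠ 0 ∧ x = a + b := by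
    intro x hx
    induction hx using AddSubmonoid.closure_induction with
    | mem a ha => exact .inr (.inl ha)
    | zero => exact .inl rfl
    | add a b ha hb iha ihb =>
      rcases eq_or_ne a 0 with rfl | ha0
      · simpa using ihb
      rcases eq_or_ne b 0 with rfl | hb0
      · simpa using iha
      exact .inr (.inr ⟨a, ha, b, hb, ha0, hb0, rfl⟩)
  rintro s ⟨hs, hs0, hirr⟩
  rcases key s hs with h | h | h
  exacts [absurd h hs0, h, absurd h hirr]

lemma exists_le_of_mem_closure {A : Set ℕ} {x : ℕ} (hx : x ∈ AddSubmonoid.closure A)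
    (hx0 : x ≠ 0) : ∃ a ∈ A, a ≤ x := by
  induction hx using AddSubmonoid.closure_induction with
  | mem a ha => exact ⟨a, ha, le_rfl⟩
  | zero => exact absurd rfl hx0
  | add x y _ _ ihx ihy =>
    rcases eq_or_ne x 0 with rfl | hx
    · simpa using ihy (by simpa using hx0)
    obtain ⟨a, ha, hax⟩ := ihx hx
    exact ⟨a, ha, by omega⟩

lemma minGens_closure_of_lt_add {A : Set ℕ} (h0 : 0 ∉ A)
    (h : ∀ a ∈ A, ∀ b ∈ A, ∀ c ∈ A, a < b + c) : minGens (AddSubmonoid.closure A) = A := by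
  refine (minGens_closure_subset A).antisymm fun a ha =>
    ⟨AddSubmonoid.subset_closure ha, ne_of_mem_of_not_mem ha h0, ?_⟩
  rintro ⟨x, hx, y, hy, hx0, hy0, rfl⟩
  obtain ⟨b, hb, hbx⟩ := exists_le_of_mem_closure hx hx0
  obtain ⟨c, hc, hcy⟩ := exists_le_of_mem_closure hy hy0
  have := h _ ha b hb c hc
  omega

end MinimalGenerators

section UpperBound

lemma injOn_natCast_minGens {T : AddSubmonoid ℕ} {m : ℕ} (hm : m ∈ T) :
    Set.InjOn (Nat.cast : ℕ → ZMod m) (minGens T) := by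
  suffices h : ∀ a ∈ minGens T, ∀ b ∈ minGens T, a ≤ b → a ≡ b [MOD m] → a = b by
    intro a ha b hb hab
    rw [ZMod.natCast_eq_natCast_iff] at hab
    rcases le_total a b with hle | hle
    · exact h a ha b hb hle hab
    · exact (h b hb a ha hle hab.symm).symm
  intro a ha b hb hle hab
  obtain ⟨q, hq⟩ := (Nat.modEq_iff_dvd' hle).1 hab
  by_contra hne
  have hqm : m * q ∈ T := by simpa [mul_comm] using T.nsmul_mem hm q
  exact hb.2.2 ⟨a, ha.1, m * q, hqm, ha.2.1, by omega, by omega⟩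

lemma exists_add_modEq_of_lt_two_mul_card {m : ℕ} [NeZero m] {B : Finset ℕ}
    (hB : Set.InjOn (Nat.cast : ℕ → ZMod m) B) (hm : m < 2 * B.card) (n : ℕ) :
    ∃ a ∈ B, ∃ b ∈ B, a + b ≡ n [MOD m] := by
  set S := B.image (Nat.cast : ℕ → ZMod m)
  set S' := S.image ((n : ZMod m) - ·)
  have hS : S.card = B.card := Finset.card_image_of_injOn hB
  have hS' : S'.card = B.card := by
    rw [Finset.card_image_of_injective _ sub_right_injective, hS]
  obtain ⟨z, hz⟩ := Finset.inter_nonempty_of_card_lt_card_add_card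
    (Finset.subset_univ S) (Finset.subset_univ S')
    (by rw [Finset.card_univ, ZMod.card]; omega)
  obtain ⟨hzS, hzS'⟩ := Finset.mem_inter.1 hz
  obtain ⟨b, hb, rfl⟩ := Finset.mem_image.1 hzS
  obtain ⟨x, hx, hab⟩ := Finset.mem_image.1 hzS'
  obtain ⟨a, ha, rfl⟩ := Finset.mem_image.1 hx
  refine ⟨a, ha, b, hb, (ZMod.natCast_eq_natCast_iff _ _ _).1 ?_⟩
  rw [Nat.cast_add, ← hab]
  ring

lemma two_mul_embDim_le {T : AddSubmonoid ℕ} {n : ℕ} (hn : n ∉ T)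
    (hgen : ∀ a ∈ minGens T, 2 * a ≤ n) {m : ℕ} (hm : m ∈ minGens T) : 2 * embDim T ≤ m := by
  have hfin : (minGens T).Finite :=
    (Set.finite_Iic n).subset fun a ha => by have := hgen a ha; simp only [Set.mem_Iic]; omega
  have : NeZero m := ⟨hm.2.1⟩
  by_contra! hlt
  obtain ⟨a, ha, b, hb, hab⟩ := exists_add_modEq_of_lt_two_mul_card (B := hfin.toFinset)
    (by simpa using injOn_natCast_minGens hm.1)
    (by rwa [← Set.ncard_eq_toFinset_card _ hfin]) n
  rw [Set.Finite.mem_toFinset] at ha hb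
  have hle : a + b ≤ n := by have := hgen a ha; have := hgen b hb; omega
  obtain ⟨q, hq⟩ := (Nat.modEq_iff_dvd' hle).1 hab
  have hqm : m * q ∈ T := by simpa [mul_comm] using T.nsmul_mem hm.1 q
  exact hn (by simpa [← hq, hle] using add_mem (add_mem ha.1 hb.1) hqm)

theorem hvec_le_choose (n i : ℕ) : hvec n i ≤ ((n + 1) / 2 - 2 * i).choose i := by
  let I := Finset.Ico (2 * i) ((n + 1) / 2)
  have hmaps : ∀ T ∈ {T : AddSubmonoid ℕ | n ∉ T ∧ embDim T = i ∧ ∀ a ∈ minGens T, 2 * a < n},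
      minGens T ∈ ((↑) : Finset ℕ → Set ℕ) '' ↑(I.powersetCard i) := by
    rintro T ⟨hnT, hT, hgen⟩
    have hsub : minGens T ⊆ I := fun a ha => by
      have := two_mul_embDim_le hnT (fun b hb => (hgen b hb).le) ha
      have := hgen a ha
      simp only [I, Finset.coe_Ico, Set.mem_Ico]
      omega
    have hfin : (minGens T).Finite := I.finite_toSet.subset hsub
    refine ⟨hfin.toFinset, Finset.mem_powersetCard.2 ⟨?_, ?_⟩, hfin.coe_toFinset⟩
    · simpa [← Finset.coe_subset] using hsub
    · rw [← hT, embDim, Set.ncard_eq_toFinset_card _ hfin]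
  calc hvec n i ≤ (((↑) : Finset ℕ → Set ℕ) '' ↑(I.powersetCard i) : Set (Set ℕ)).ncard :=
        Set.ncard_le_ncard_of_injOn minGens hmaps minGens_injective.injOn (Set.toFinite _)
    _ = ((n + 1) / 2 - 2 * i).choose i := by
      rw [Set.ncard_image_of_injective _ Finset.coe_injective, Set.ncard_coe_finset,
        Finset.card_powersetCard, Nat.card_Ico]

end UpperBound

lemma Finset.disjoint_powersetCard {α : Type*} {s t : Finset α} {i : ℕ} (hi : i ≠ 0)
    (h : Disjoint s t) : Disjoint (s.powersetCard i) (t.powersetCard i) := by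
  refine Finset.disjoint_left.2 fun A hAs hAt => ?_
  rw [Finset.mem_powersetCard] at hAs hAt
  obtain ⟨x, hx⟩ := Finset.card_ne_zero.1 (hAs.2 ▸ hi)
  exact Finset.disjoint_left.1 h (hAs.1 hx) (hAt.1 hx)

section LowerBound

def window (n j : ℕ) : Finset ℕ := Finset.Ioc (n / (j + 1)) ((n - 1) / j)

lemma mem_window {n j a : ℕ} (hn : 0 < n) (hj : 0 < j) :
    a ∈ window n j ↔ n < (j + 1) * a ∧ j * a < n := by
  rw [window, Finset.mem_Ioc, Nat.div_lt_iff_lt_mul (by omega), Nat.le_div_iff_mul_le hj,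
    mul_comm a, mul_comm a]
  omega

lemma card_window (n j : ℕ) : (window n j).card = (n - 1) / j - n / (j + 1) :=
  Nat.card_Ioc _ _

lemma disjoint_window {n j k : ℕ} (hjk : j < k) : Disjoint (window n j) (window n k) := by
  have : (n - 1) / k ≤ n / (j + 1) :=
    (Nat.div_le_div_left hjk (by omega)).trans (Nat.div_le_div_right (by omega))
  simp only [window, Finset.disjoint_left, Finset.mem_Ioc]
  omega

lemma notMem_closure_of_subset_window {n j : ℕ} (hn : 0 < n) (hj : 0 < j) {A : Set ℕ}
    (hA : A ⊆ window n j) : n ∉ AddSubmonoid.closure A := by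
  have key : ∀ x ∈ AddSubmonoid.closure A,
      x = 0 ∨ ∃ k, k * n < (j + 1) * x ∧ j * x < k * n := by
    intro x hx
    induction hx using AddSubmonoid.closure_induction with
    | mem a ha => exact .inr ⟨1, by simpa using (mem_window hn hj).1 (hA ha)⟩
    | zero => exact .inl rfl
    | add x y _ _ hx hy =>
      rcases hx with rfl | ⟨k, hk⟩
      · simpa using hy
      rcases hy with rfl | ⟨l, hl⟩
      · simpa using Or.inr ⟨k, hk⟩
      exact .inr ⟨k + l, by nlinarith, by nlinarith⟩
  intro hmem
  rcases key n hmem with h | ⟨k, hk₁, hk₂⟩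
  · omega
  · have : k < j + 1 := lt_of_mul_lt_mul_right hk₁ n.zero_le
    have : j < k := lt_of_mul_lt_mul_right hk₂ n.zero_le
    omega

lemma minGens_closure_of_subset_window {n j : ℕ} (hn : 0 < n) (hj : 0 < j) {A : Set ℕ}
    (hA : A ⊆ window n j) : minGens (AddSubmonoid.closure A) = A := by
  refine minGens_closure_of_lt_add (fun h0 => ?_) fun a ha b hb c hc => ?_
  · have := ((mem_window hn hj).1 (hA h0)).1
    omega
  · have ha := (mem_window hn hj).1 (hA ha)
    have hb := (mem_window hn hj).1 (hA hb)
    have hc := (mem_window hn hj).1 (hA hc)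
    nlinarith

theorem sum_choose_le_hvec (n i N : ℕ) (hn : 1 ≤ n) (hi : 1 ≤ i) :
    ∑ j ∈ Finset.Icc 2 N, ((n - 1) / j - n / (j + 1)).choose i ≤ hvec n i := by
  let 𝒜 := (Finset.Icc 2 N).biUnion fun j => (window n j).powersetCard i
  have hdisj :
      (↑(Finset.Icc 2 N) : Set ℕ).PairwiseDisjoint fun j => (window n j).powersetCard i :=
    fun j _ k _ hjk => Finset.disjoint_powersetCard (by omega) <| by
      rcases hjk.lt_or_gt with h | h
      exacts [disjoint_window h, (disjoint_window h).symm]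
  have h𝒜 : ∀ A ∈ 𝒜, ∃ j, 2 ≤ j ∧ ↑A ⊆ (window n j : Set ℕ) ∧ A.card = i := by
    intro A hA
    obtain ⟨j, hj, hA⟩ := Finset.mem_biUnion.1 hA
    rw [Finset.mem_powersetCard] at hA
    exact ⟨j, (Finset.mem_Icc.1 hj).1, Finset.coe_subset.2 hA.1, hA.2⟩
  have hmin : ∀ A ∈ 𝒜, minGens (AddSubmonoid.closure (A : Set ℕ)) = A := fun A hA => by
    obtain ⟨j, hj, hAj, -⟩ := h𝒜 A hA
    exact minGens_closure_of_subset_window hn (by omega) hAj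
  have hmaps : ∀ A ∈ (𝒜 : Set (Finset ℕ)), AddSubmonoid.closure (A : Set ℕ) ∈
      {T : AddSubmonoid ℕ | n ∉ T ∧ embDim T = i ∧ ∀ a ∈ minGens T, 2 * a < n} := by
    intro A hA
    obtain ⟨j, hj, hAj, hcard⟩ := h𝒜 A hA
    refine ⟨notMem_closure_of_subset_window hn (by omega) hAj, ?_, fun a ha => ?_⟩
    · rw [embDim, hmin A hA, Set.ncard_coe_finset, hcard]
    · rw [hmin A hA] at ha
      have := ((mem_window hn (by omega)).1 (hAj ha)).2
      nlinarith
  have hinj : Set.InjOn (fun A : Finset ℕ => AddSubmonoid.closure (A : Set ℕ)) 𝒜 :=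
    fun A hA B hB hAB => Finset.coe_injective <| by
      rw [← hmin A hA, ← hmin B hB]
      exact congrArg minGens hAB
  calc ∑ j ∈ Finset.Icc 2 N, ((n - 1) / j - n / (j + 1)).choose i
      = ∑ j ∈ Finset.Icc 2 N, ((window n j).powersetCard i).card := by
        simp only [Finset.card_powersetCard, card_window]
    _ = (𝒜 : Set (Finset ℕ)).ncard := by rw [Set.ncard_coe_finset, Finset.card_biUnion hdisj]
    _ ≤ hvec n i := Set.ncard_le_ncard_of_injOn _ hmaps hinj
        ((finite_setOf_forall_minGens_lt n).subset fun T hT a ha => by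
          have := hT.2.2 a ha
          omega)

end LowerBound

theorem statement9_general (n i N : ℕ) (hn : 1 ≤ n) (hi : 1 ≤ i) :
    (∑ j ∈ Finset.Icc 2 N, Nat.choose ((n - 1) / j - n / (j + 1)) i) ≤ hvec n i ∧
    hvec n i ≤ Nat.choose ((n + 1) / 2 - 2 * i) i :=
  ⟨sum_choose_le_hvec n i N hn hi, hvec_le_choose n i⟩

theorem statement9 (n i N : ℕ) (hn : 1 ≤ n) (hi : 1 ≤ i) (hN : 2 ≤ N) :
    (∑ j ∈ Finset.Icc 2 N, Nat.choose ((n - 1) / j - n / (j + 1)) i) ≤ hvec n i ∧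
    hvec n i ≤ Nat.choose ((n + 1) / 2 - 2 * i) i :=
  statement9_general n i N hn hi
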